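/- If 𝓛 u = 0 for a smooth function u, then 𝓛(|∇_v u|²) = 2(|D²_v u|² + ∇_v u · ∇_x u). -/

import Mathlib

noncomputable section

/-- Partial derivative in time of a curried function of `(t, x, v)`. -/
def Dt {n : ℕ} (u : ℝ → (Fin n → ℝ) → (Fin n → ℝ) → ℝ) :
    ℝ → (Fin n → ℝ) → (Fin n → ℝ) → ℝ :=
  fun t x v => deriv (fun s => u s x v) t

/-- Partial derivative in the `i`-th space variable. -/
def Dx {n : ℕ} (i : Fin n) (u : ℝ → (Fin n → ℝ) → (Fin n → ℝ) → ℝ) :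
    ℝ → (Fin n → ℝ) → (Fin n → ℝ) → ℝ :=
  fun t x v => deriv (fun s => u t (Function.update x i s) v) (x i)

/-- Partial derivative in the `i`-th velocity variable. -/
def Dv {n : ℕ} (i : Fin n) (u : ℝ → (Fin n → ℝ) → (Fin n → ℝ) → ℝ) :
    ℝ → (Fin n → ℝ) → (Fin n → ℝ) → ℝ :=
  fun t x v => deriv (fun s => u t x (Function.update v i s)) (v i)

/-- The Kolmogorov operator `𝓛 u = Δ_v u − ∂_t u − v·∇_x u`. -/
def Kol {n : ℕ} (u : ℝ → (Fin n → ℝ) → (Fin n → ℝ) → ℝ) :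
    ℝ → (Fin n → ℝ) → (Fin n → ℝ) → ℝ :=
  fun t x v => (∑ i, Dv i (Dv i u) t x v) - Dt u t x v - ∑ i, v i * Dx i u t x v

/-- Euclidean norm on `Fin n → ℝ`. -/
def euclNorm {n : ℕ} (x : Fin n → ℝ) : ℝ := Real.sqrt (∑ i, x i ^ 2)

/-- Euclidean dot product on `Fin n → ℝ`. -/
def edot {n : ℕ} (x y : Fin n → ℝ) : ℝ := ∑ i, x i * y i

/-- Points `(t, x, v)` of the Galilean group. -/
abbrev Pt (n : ℕ) := ℝ × (Fin n → ℝ) × (Fin n → ℝ)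

/-- Galilean composition `z₀ ∘ z = (t₀+t, x₀+x+t v₀, v₀+v)`. -/
def galMul {n : ℕ} (a b : Pt n) : Pt n :=
  (a.1 + b.1, a.2.1 + b.2.1 + b.1 • a.2.2, a.2.2 + b.2.2)

/-- Galilean inverse `z₀⁻¹ = (−t₀, −x₀+t₀v₀, −v₀)`. -/
def galInv {n : ℕ} (a : Pt n) : Pt n :=
  (-a.1, -a.2.1 + a.1 • a.2.2, -a.2.2)

/-- Kinetic scaling `S_r(t,x,v) = (r²t, r³x, rv)`. -/
def galS {n : ℕ} (r : ℝ) (z : Pt n) : Pt n := (r ^ 2 * z.1, r ^ 3 • z.2.1, r • z.2.2)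

/-- The kinetic cylinder of radius `r` centered at `z₀`. -/
def Qc {n : ℕ} (r : ℝ) (z₀ : Pt n) : Set (Pt n) :=
  {z | -r ^ 2 < z.1 - z₀.1 ∧ z.1 - z₀.1 ≤ 0 ∧
    euclNorm (z.2.1 - z₀.2.1 - (z.1 - z₀.1) • z₀.2.2) < r ^ 3 ∧
    euclNorm (z.2.2 - z₀.2.2) < r}



def DD {n : ℕ} (w : Pt n) (G : Pt n → ℝ) : Pt n → ℝ := fun z => fderiv ℝ G z w

lemma contDiff_DD {n : ℕ} (w : Pt n) {G : Pt n → ℝ} (h : ContDiff ℝ (⊤ : ℕ∞) G) :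
    ContDiff ℝ (⊤ : ℕ∞) (DD w G) := by
  have h1 : ContDiff ℝ (⊤ : ℕ∞) (fderiv ℝ G) := h.fderiv_right (by simp)
  exact (ContinuousLinearMap.apply ℝ ℝ w).contDiff.comp h1

def etB (n : ℕ) : Pt n := (1, 0, 0)
def exB {n : ℕ} (i : Fin n) : Pt n := (0, Pi.single i 1, 0)
def evB {n : ℕ} (i : Fin n) : Pt n := (0, 0, Pi.single i 1)

lemma Dt_eq {n : ℕ} {G : Pt n → ℝ} (h : ContDiff ℝ (⊤ : ℕ∞) G) (t : ℝ) (x v : Fin n → ℝ) :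
    deriv (fun s => G (s, x, v)) t = DD (etB n) G (t, x, v) := by
  have hG := (h.differentiable (by simp) (t, x, v)).hasFDerivAt
  have hc : HasDerivAt (fun s : ℝ => ((s, x, v) : Pt n)) (etB n) t :=
    HasDerivAt.prodMk (hasDerivAt_id t) (HasDerivAt.prodMk (hasDerivAt_const t x) (hasDerivAt_const t v))
  exact (hG.comp_hasDerivAt t hc).deriv

lemma Dx_eq {n : ℕ} {G : Pt n → ℝ} (h : ContDiff ℝ (⊤ : ℕ∞) G) (i : Fin n) (t : ℝ) (x v : Fin n → ℝ) :
    deriv (fun s => G (t, Function.update x i s, v)) (x i) = DD (exB i) G (t, x, v) := by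
  have hG := (h.differentiable (by simp) (t, Function.update x i (x i), v)).hasFDerivAt
  have hc : HasDerivAt (fun s : ℝ => ((t, Function.update x i s, v) : Pt n)) (exB i) (x i) :=
    HasDerivAt.prodMk (hasDerivAt_const (x i) t) (HasDerivAt.prodMk (hasDerivAt_update x i (x i)) (hasDerivAt_const (x i) v))
  have := hG.comp_hasDerivAt (x i) hc
  simpa [Function.update_eq_self, Function.comp_def, DD] using this.deriv

lemma Dv_eq {n : ℕ} {G : Pt n → ℝ} (h : ContDiff ℝ (⊤ : ℕ∞) G) (i : Fin n) (t : ℝ) (x v : Fin n → ℝ) :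
    deriv (fun s => G (t, x, Function.update v i s)) (v i) = DD (evB i) G (t, x, v) := by
  have hG := (h.differentiable (by simp) (t, x, Function.update v i (v i))).hasFDerivAt
  have hc : HasDerivAt (fun s : ℝ => ((t, x, Function.update v i s) : Pt n)) (evB i) (v i) :=
    HasDerivAt.prodMk (hasDerivAt_const (v i) t) (HasDerivAt.prodMk (hasDerivAt_const (v i) x) (hasDerivAt_update v i (v i)))
  have := hG.comp_hasDerivAt (v i) hc
  simpa [Function.update_eq_self, Function.comp_def, DD] using this.deriv

lemma DD_comm {n : ℕ} {G : Pt n → ℝ} (h : ContDiff ℝ (⊤ : ℕ∞) G) (w1 w2 : Pt n) (z : Pt n) :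
    DD w1 (DD w2 G) z = DD w2 (DD w1 G) z := by
  have hd : DifferentiableAt ℝ (fderiv ℝ G) z :=
    (h.fderiv_right (m := ((⊤ : ℕ∞) : WithTop ℕ∞)) (by simp)).differentiable (by simp) z
  have key : ∀ w w' : Pt n, DD w' (DD w G) z = fderiv ℝ (fderiv ℝ G) z w' w := by
    intro w w'
    have : HasFDerivAt (fun y => fderiv ℝ G y w)
        ((ContinuousLinearMap.apply ℝ ℝ w).comp (fderiv ℝ (fderiv ℝ G) z)) z :=
      (ContinuousLinearMap.apply ℝ ℝ w).hasFDerivAt.comp z hd.hasFDerivAt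
    show fderiv ℝ (fun y => fderiv ℝ G y w) z w' = _
    rw [this.fderiv]; rfl
  rw [key, key]
  exact IsSymmSndFDerivAt.eq ((h.contDiffAt (x := z)).isSymmSndFDerivAt (by rw [minSmoothness_of_isRCLikeNormedField]; exact WithTop.coe_le_coe.mpr le_top)) w1 w2

lemma DD_mul {n : ℕ} (w : Pt n) {G H : Pt n → ℝ} (hG : ContDiff ℝ (⊤ : ℕ∞) G) (hH : ContDiff ℝ (⊤ : ℕ∞) H)
    (z : Pt n) :
    DD w (fun z => G z * H z) z = DD w G z * H z + G z * DD w H z := by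
  have := fderiv_fun_mul (hG.differentiable (by simp) z) (hH.differentiable (by simp) z)
  simp only [DD]
  rw [this]
  simp [mul_comm]
  ring

lemma DD_sum {n : ℕ} (w : Pt n) {ι : Type*} (s : Finset ι) (G : ι → Pt n → ℝ)
    (hG : ∀ i, ContDiff ℝ (⊤ : ℕ∞) (G i)) (z : Pt n) :
    DD w (fun z => ∑ i ∈ s, G i z) z = ∑ i ∈ s, DD w (G i) z := by
  simp only [DD]
  rw [fderiv_fun_sum fun i _ => (hG i).differentiable (by simp) z]
  simp

lemma DD_coord {n : ℕ} (w : Pt n) (j : Fin n) (z : Pt n) :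
    DD w (fun z : Pt n => z.2.2 j) z = w.2.2 j := by
  have hL : HasFDerivAt (fun z : Pt n => z.2.2 j)
      ((ContinuousLinearMap.proj j).comp
        ((ContinuousLinearMap.snd ℝ (Fin n → ℝ) (Fin n → ℝ)).comp
          (ContinuousLinearMap.snd ℝ ℝ ((Fin n → ℝ) × (Fin n → ℝ))))) z :=
    ((ContinuousLinearMap.proj j).comp
        ((ContinuousLinearMap.snd ℝ (Fin n → ℝ) (Fin n → ℝ)).comp
          (ContinuousLinearMap.snd ℝ ℝ ((Fin n → ℝ) × (Fin n → ℝ))))).hasFDerivAt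
  show fderiv ℝ (fun z : Pt n => z.2.2 j) z w = _
  rw [hL.fderiv]; rfl

lemma DD_sub {n : ℕ} (w : Pt n) {G H : Pt n → ℝ} (hG : ContDiff ℝ (⊤ : ℕ∞) G) (hH : ContDiff ℝ (⊤ : ℕ∞) H)
    (z : Pt n) :
    DD w (fun z => G z - H z) z = DD w G z - DD w H z := by
  simp only [DD]
  rw [fderiv_fun_sub (hG.differentiable (by simp) z) (hH.differentiable (by simp) z)]
  simp

lemma contDiff_coord {n : ℕ} (j : Fin n) : ContDiff ℝ (⊤ : ℕ∞) (fun z : Pt n => z.2.2 j) := by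
  fun_prop

section curried
variable {n : ℕ} {G : Pt n → ℝ} {g : ℝ → (Fin n → ℝ) → (Fin n → ℝ) → ℝ}

lemma Dt_eq' (hG : ContDiff ℝ (⊤ : ℕ∞) G) (hg : ∀ t x v, g t x v = G (t, x, v)) (t : ℝ)
    (x v : Fin n → ℝ) : Dt g t x v = DD (etB n) G (t, x, v) := by
  show deriv (fun s => g s x v) t = _
  rw [show (fun s => g s x v) = (fun s => G (s, x, v)) from funext fun s => hg s x v]
  exact Dt_eq hG t x v

lemma Dx_eq' (hG : ContDiff ℝ (⊤ : ℕ∞) G) (hg : ∀ t x v, g t x v = G (t, x, v)) (i : Fin n) (t : ℝ)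
    (x v : Fin n → ℝ) : Dx i g t x v = DD (exB i) G (t, x, v) := by
  show deriv (fun s => g t (Function.update x i s) v) (x i) = _
  rw [show (fun s => g t (Function.update x i s) v)
      = (fun s => G (t, Function.update x i s, v)) from funext fun s => hg _ _ _]
  exact Dx_eq hG i t x v

lemma Dv_eq' (hG : ContDiff ℝ (⊤ : ℕ∞) G) (hg : ∀ t x v, g t x v = G (t, x, v)) (i : Fin n) (t : ℝ)
    (x v : Fin n → ℝ) : Dv i g t x v = DD (evB i) G (t, x, v) := by
  show deriv (fun s => g t x (Function.update v i s)) (v i) = _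
  rw [show (fun s => g t x (Function.update v i s))
      = (fun s => G (t, x, Function.update v i s)) from funext fun s => hg _ _ _]
  exact Dv_eq hG i t x v

lemma Kol_eq' (hG : ContDiff ℝ (⊤ : ℕ∞) G) (hg : ∀ t x v, g t x v = G (t, x, v)) (t : ℝ)
    (x v : Fin n → ℝ) :
    Kol g t x v = (∑ i, DD (evB i) (DD (evB i) G) (t, x, v)) - DD (etB n) G (t, x, v)
      - ∑ i, v i * DD (exB i) G (t, x, v) := by
  show (∑ i, Dv i (Dv i g) t x v) - Dt g t x v - ∑ i, v i * Dx i g t x v = _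
  rw [Dt_eq' hG hg]
  congr 1
  · congr 1
    refine Finset.sum_congr rfl fun i _ => ?_
    exact Dv_eq' (contDiff_DD _ hG) (Dv_eq' hG hg i) i t x v
  · exact Finset.sum_congr rfl fun i _ => by rw [Dx_eq' hG hg]
end curried

lemma DD_add {n : ℕ} (w : Pt n) {G H : Pt n → ℝ} (hG : ContDiff ℝ (⊤ : ℕ∞) G) (hH : ContDiff ℝ (⊤ : ℕ∞) H)
    (z : Pt n) :
    DD w (fun z => G z + H z) z = DD w G z + DD w H z := by
  simp only [DD]
  rw [fderiv_fun_add (hG.differentiable (by simp) z) (hH.differentiable (by simp) z)]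
  simp

lemma final_algebra {n : ℕ} (v X S f : Fin n → ℝ) (g T R : Fin n → Fin n → ℝ)
    (hKey : ∀ i, (∑ j, T j i) - S i - (X i + ∑ j, v j * R j i) = 0) :
    (∑ j, ∑ i, (T j i * f i + g j i * g j i + (g j i * g j i + f i * T j i)))
      - (∑ i, (S i * f i + f i * S i))
      - (∑ j, v j * ∑ i, (R j i * f i + f i * R j i))
      = 2 * ((∑ i, ∑ j, g j i ^ 2) + ∑ i, f i * X i) := by
  have h1 : ∀ i, ∑ j, (T j i * f i + g j i * g j i + (g j i * g j i + f i * T j i))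
      = 2 * (∑ j, g j i ^ 2) + 2 * f i * (∑ j, T j i) := by
    intro i
    rw [Finset.mul_sum, Finset.mul_sum, ← Finset.sum_add_distrib]
    exact Finset.sum_congr rfl fun j _ => by ring
  have h3 : ∀ i, ∑ j, v j * (R j i * f i + f i * R j i) = 2 * f i * ∑ j, v j * R j i := by
    intro i
    rw [Finset.mul_sum]
    exact Finset.sum_congr rfl fun j _ => by ring
  have hswap3 : ∑ j, v j * ∑ i, (R j i * f i + f i * R j i)
      = ∑ i, ∑ j, v j * (R j i * f i + f i * R j i) := by
    simp_rw [Finset.mul_sum]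
    exact Finset.sum_comm
  rw [Finset.sum_comm, hswap3]
  simp_rw [h1, h3]
  rw [← Finset.sum_sub_distrib, ← Finset.sum_sub_distrib, mul_add, Finset.mul_sum,
    Finset.mul_sum, ← Finset.sum_add_distrib]
  refine Finset.sum_congr rfl fun i _ => ?_
  linear_combination 2 * f i * hKey i

lemma main_aux {n : ℕ} (u : ℝ → (Fin n → ℝ) → (Fin n → ℝ) → ℝ) (F : Pt n → ℝ)
    (hF : ContDiff ℝ (⊤ : ℕ∞) F) (huF : ∀ t x v, u t x v = F (t, x, v))
    (hL : ∀ (t : ℝ) (x v : Fin n → ℝ), Kol u t x v = 0) (t : ℝ) (x v : Fin n → ℝ) :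
    Kol (fun t x v => ∑ i, (Dv i u t x v) ^ 2) t x v =
      2 * ((∑ i, ∑ j, (Dv j (Dv i u) t x v) ^ 2) +
        ∑ i, Dv i u t x v * Dx i u t x v) := by
  have hf : ∀ i : Fin n, ContDiff ℝ (⊤ : ℕ∞) (DD (evB i) F) := fun i => contDiff_DD _ hF
  have hW : ContDiff ℝ (⊤ : ℕ∞) (fun z : Pt n => ∑ i, DD (evB i) F z * DD (evB i) F z) :=
    ContDiff.sum fun i _ => (hf i).mul (hf i)
  have hwfun : ∀ a b c, (fun t x v => ∑ i, (Dv i u t x v) ^ 2) a b c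
      = (fun z : Pt n => ∑ i, DD (evB i) F z * DD (evB i) F z) (a, b, c) := by
    intro a b c
    show ∑ i, (Dv i u a b c) ^ 2 = ∑ i, DD (evB i) F (a, b, c) * DD (evB i) F (a, b, c)
    refine Finset.sum_congr rfl fun i _ => ?_
    rw [pow_two, Dv_eq' hF huF]
  have e1 : ∀ i, Dv i u t x v = DD (evB i) F (t, x, v) := fun i => Dv_eq' hF huF i t x v
  have e2 : ∀ i, Dx i u t x v = DD (exB i) F (t, x, v) := fun i => Dx_eq' hF huF i t x v
  have e3 : ∀ j i, Dv j (Dv i u) t x v = DD (evB j) (DD (evB i) F) (t, x, v) :=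
    fun j i => Dv_eq' (contDiff_DD _ hF) (Dv_eq' hF huF i) j t x v
  rw [Kol_eq' hW hwfun t x v]
  simp only [e1, e2, e3]
  -- the PDE hypothesis in fderiv language
  have hK0 : (fun z : Pt n => (∑ j, DD (evB j) (DD (evB j) F) z) - DD (etB n) F z
      - ∑ j, z.2.2 j * DD (exB j) F z) = fun _ => (0 : ℝ) := by
    funext z
    obtain ⟨a, b, c⟩ := z
    have h := hL a b c
    rw [Kol_eq' hF huF a b c] at h
    exact h
  have hDK : ∀ i : Fin n, DD (evB i) (fun z : Pt n =>
      (∑ j, DD (evB j) (DD (evB j) F) z) - DD (etB n) F z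
        - ∑ j, z.2.2 j * DD (exB j) F z) (t, x, v) = 0 := by
    intro i
    rw [hK0]
    simp [DD]
  have hKey : ∀ i : Fin n,
      (∑ j, DD (evB i) (DD (evB j) (DD (evB j) F)) (t, x, v))
        - DD (evB i) (DD (etB n) F) (t, x, v)
        - (DD (exB i) F (t, x, v)
            + ∑ j, v j * DD (evB i) (DD (exB j) F) (t, x, v)) = 0 := by
    intro i
    have h := hDK i
    have hS1 : ContDiff ℝ (⊤ : ℕ∞) (fun z : Pt n => ∑ j, DD (evB j) (DD (evB j) F) z) :=
      ContDiff.sum fun j _ => contDiff_DD _ (contDiff_DD _ hF)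
    have hS2 : ContDiff ℝ (⊤ : ℕ∞) (fun z : Pt n => DD (etB n) F z) := contDiff_DD _ hF
    have hS3 : ContDiff ℝ (⊤ : ℕ∞) (fun z : Pt n => ∑ j, z.2.2 j * DD (exB j) F z) :=
      ContDiff.sum fun j _ => (contDiff_coord j).mul (contDiff_DD _ hF)
    rw [DD_sub _ (hS1.sub hS2) hS3, DD_sub _ hS1 hS2,
      DD_sum _ _ _ (fun j => contDiff_DD _ (contDiff_DD _ hF)),
      DD_sum _ _ _ (fun j => (contDiff_coord j).mul (contDiff_DD _ hF))] at h
    have hprod : ∀ j : Fin n, DD (evB i) (fun z : Pt n => z.2.2 j * DD (exB j) F z) (t, x, v)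
        = (Pi.single i 1 : Fin n → ℝ) j * DD (exB j) F (t, x, v)
          + v j * DD (evB i) (DD (exB j) F) (t, x, v) := by
      intro j
      rw [DD_mul _ (contDiff_coord j) (contDiff_DD _ hF), DD_coord]
      rfl
    simp only [hprod] at h
    rw [Finset.sum_add_distrib] at h
    have hsingle : ∑ j, (Pi.single i 1 : Fin n → ℝ) j * DD (exB j) F (t, x, v)
        = DD (exB i) F (t, x, v) := by
      simp [Pi.single_apply, ite_mul]
    rw [hsingle] at h
    linarith [h]
  -- expand the derivatives of W
  have hDW : ∀ w : Pt n, DD w (fun z : Pt n => ∑ i, DD (evB i) F z * DD (evB i) F z)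
      = fun z => ∑ i, (DD w (DD (evB i) F) z * DD (evB i) F z
          + DD (evB i) F z * DD w (DD (evB i) F) z) := by
    intro w
    funext z
    rw [DD_sum w Finset.univ _ (fun i => (hf i).mul (hf i)) z]
    exact Finset.sum_congr rfl fun i _ => DD_mul w (hf i) (hf i) z
  simp only [hDW]
  have hc1 : ∀ j i : Fin n, DD (evB j) (DD (evB j) (DD (evB i) F)) (t, x, v)
      = DD (evB i) (DD (evB j) (DD (evB j) F)) (t, x, v) := by
    intro j i
    have hswap : DD (evB j) (DD (evB i) F) = DD (evB i) (DD (evB j) F) :=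
      funext fun z => DD_comm hF _ _ z
    calc DD (evB j) (DD (evB j) (DD (evB i) F)) (t, x, v)
        = DD (evB j) (DD (evB i) (DD (evB j) F)) (t, x, v) := by rw [hswap]
      _ = DD (evB i) (DD (evB j) (DD (evB j) F)) (t, x, v) :=
          DD_comm (contDiff_DD _ hF) _ _ _
  have hD2W : ∀ j : Fin n, DD (evB j) (fun z : Pt n =>
      ∑ i, (DD (evB j) (DD (evB i) F) z * DD (evB i) F z
        + DD (evB i) F z * DD (evB j) (DD (evB i) F) z)) (t, x, v)
      = ∑ i, (DD (evB i) (DD (evB j) (DD (evB j) F)) (t, x, v) * DD (evB i) F (t, x, v)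
          + DD (evB j) (DD (evB i) F) (t, x, v) * DD (evB j) (DD (evB i) F) (t, x, v)
          + (DD (evB j) (DD (evB i) F) (t, x, v) * DD (evB j) (DD (evB i) F) (t, x, v)
            + DD (evB i) F (t, x, v) * DD (evB i) (DD (evB j) (DD (evB j) F)) (t, x, v))) := by
    intro j
    rw [DD_sum _ _ _
      (fun i => ((contDiff_DD _ (hf i)).mul (hf i)).add ((hf i).mul (contDiff_DD _ (hf i))))]
    refine Finset.sum_congr rfl fun i _ => ?_
    rw [DD_add _ ((contDiff_DD _ (hf i)).mul (hf i)) ((hf i).mul (contDiff_DD _ (hf i))),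
      DD_mul _ (contDiff_DD _ (hf i)) (hf i), DD_mul _ (hf i) (contDiff_DD _ (hf i)), hc1 j i]
  simp only [hD2W]
  have hc2 : ∀ i : Fin n, DD (etB n) (DD (evB i) F) (t, x, v)
      = DD (evB i) (DD (etB n) F) (t, x, v) := fun i => DD_comm hF _ _ _
  have hc3 : ∀ j i : Fin n, DD (exB j) (DD (evB i) F) (t, x, v)
      = DD (evB i) (DD (exB j) F) (t, x, v) := fun j i => DD_comm hF _ _ _
  simp only [hc2, hc3]
  exact final_algebra v
    (fun i => DD (exB i) F (t, x, v))
    (fun i => DD (evB i) (DD (etB n) F) (t, x, v))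
    (fun i => DD (evB i) F (t, x, v))
    (fun j i => DD (evB j) (DD (evB i) F) (t, x, v))
    (fun j i => DD (evB i) (DD (evB j) (DD (evB j) F)) (t, x, v))
    (fun j i => DD (evB i) (DD (exB j) F) (t, x, v))
    hKey

/-- If `𝓛 u = 0` then `𝓛(|∇_v u|²) = 2(|D²_v u|² + ∇_v u · ∇_x u)`. -/
theorem Kol_gradv_sq_identity (n : ℕ)
    (u : ℝ → (Fin n → ℝ) → (Fin n → ℝ) → ℝ)
    (hu : ContDiff ℝ (⊤ : ℕ∞) (fun z : Pt n => u z.1 z.2.1 z.2.2))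
    (hL : ∀ (t : ℝ) (x v : Fin n → ℝ), Kol u t x v = 0) :
    ∀ (t : ℝ) (x v : Fin n → ℝ),
      Kol (fun t x v => ∑ i, (Dv i u t x v) ^ 2) t x v =
        2 * ((∑ i, ∑ j, (Dv j (Dv i u) t x v) ^ 2) +
          ∑ i, Dv i u t x v * Dx i u t x v) := by
  exact fun t x v => main_aux u _ hu (fun _ _ _ => rfl) hL t x v
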